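/- arXiv:1910.02816 — 2 statements merged into one kernel-verified Lean document; each statement's English description precedes it below -/
import Mathlib

section
/- Let α be a composition with λ(α)·w(α) = α as above, and define V(α) = {β : λ(β) = λ(α) and w(β) ≤ w(α) in Bruhat order}. Then V(α) = {λ(α)·σ : σ ∈ S_n, σ ≤ w(α)}. -/
/-!
The permutations `τ` with `lam ∘ τ = β` form a left coset of the stabiliser of `lam`, a Young
subgroup because the level sets of the antitone `lam` are intervals. If two adjacent equal values
of `lam` occur out of order in `τ`, swapping them stays in the coset and is a Bruhat covering step
downwards. Descending this way ends at the unique coset element in which equal values of `lam`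
occur in increasing order; a shortest element cannot be descended from, so it is that element.
Hence `w(β) ≤ σ` for every `σ` with `lam ∘ σ = β`, and both descriptions of `V` agree by
transitivity of the Bruhat order.
-/

/-- The Coxeter length of a permutation of `Fin n`, i.e. its inversion number. -/
def permLength {n : ℕ} (w : Equiv.Perm (Fin n)) : ℕ :=
  ((Finset.univ : Finset (Fin n × Fin n)).filter
    (fun p => p.1 < p.2 ∧ w p.2 < w p.1)).card

/-- The Bruhat order on `S_n`. -/
def BruhatLE {n : ℕ} (u w : Equiv.Perm (Fin n)) : Prop :=
  Relation.ReflTransGen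
    (fun a b => (∃ i j : Fin n, i ≠ j ∧ b = a * Equiv.swap i j) ∧
      permLength b = permLength a + 1) u w

open Equiv

lemma Fin.swap_lt_swap_iff_of_covBy {n : ℕ} {a b : Fin n} (hab : a ⋖ b) {x y : Fin n} :
    swap a b x < swap a b y ↔ x < y ∧ ¬(x = a ∧ y = b) ∨ x = b ∧ y = a := by
  rw [Fin.covBy_iff, Nat.covBy_iff_add_one_eq] at hab
  simp only [swap_apply_def]
  split_ifs <;> simp only [Fin.lt_def, Fin.ext_iff] at * <;> omega

lemma permLength_swap_mul_add_one {n : ℕ} {a b : Fin n} (hab : a ⋖ b) {σ : Perm (Fin n)}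
    (h : σ⁻¹ b < σ⁻¹ a) : permLength (swap a b * σ) + 1 = permLength σ := by
  unfold permLength
  rw [← Finset.card_insert_of_notMem (a := (σ⁻¹ b, σ⁻¹ a))]
  · congr 1
    ext ⟨p, q⟩
    simp only [Finset.mem_insert, Finset.mem_filter, Finset.mem_univ, true_and, Prod.mk.injEq,
      Perm.mul_apply, Fin.swap_lt_swap_iff_of_covBy hab, ← Perm.eq_inv_iff_eq]
    constructor
    · rintro (⟨rfl, rfl⟩ | ⟨hpq, ⟨hlt, -⟩ | ⟨rfl, rfl⟩⟩)
      · simpa using ⟨h, hab.lt⟩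
      · exact ⟨hpq, hlt⟩
      · exact absurd hpq (lt_asymm h)
    · rintro ⟨hpq, hlt⟩
      by_cases hp : p = σ⁻¹ b ∧ q = σ⁻¹ a
      · exact Or.inl hp
      · exact Or.inr ⟨hpq, Or.inl ⟨hlt, fun ⟨hq, hp'⟩ => hp ⟨hp', hq⟩⟩⟩
  · simp only [Finset.mem_filter, Finset.mem_univ, true_and, not_and]
    simp [lt_asymm hab.lt]

lemma bruhatLE_swap_mul {n : ℕ} {a b : Fin n} (hab : a ⋖ b) {σ : Perm (Fin n)}
    (h : σ⁻¹ b < σ⁻¹ a) : BruhatLE (swap a b * σ) σ := by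
  refine .single ⟨⟨σ⁻¹ b, σ⁻¹ a, h.ne, ?_⟩, (permLength_swap_mul_add_one hab h).symm⟩
  rw [mul_assoc, mul_swap_eq_swap_mul]
  simp only [Perm.coe_inv, apply_symm_apply, swap_comm b a, swap_mul_self_mul]

lemma comp_swap_mul_of_eq {α β : Type*} [DecidableEq α] {f : α → β} {a b : α} (h : f a = f b)
    (σ : Perm α) :
    f ∘ ⇑(swap a b * σ) = f ∘ ⇑σ := by
  ext x
  simp only [Function.comp_apply, Perm.mul_apply, swap_apply_def]
  split_ifs <;> simp_all

lemma exists_bruhatLE_forall_covBy_inv_lt {n : ℕ} {β : Type*} (f : Fin n → β)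
    (τ : Perm (Fin n)) :
    ∃ ρ : Perm (Fin n), f ∘ ⇑ρ = f ∘ ⇑τ ∧ BruhatLE ρ τ ∧
      ∀ a b, a ⋖ b → f a = f b → ρ⁻¹ a < ρ⁻¹ b := by
  induction hm : permLength τ using Nat.strong_induction_on generalizing τ with
  | _ m ih =>
  by_cases hsorted : ∀ a b, a ⋖ b → f a = f b → τ⁻¹ a < τ⁻¹ b
  · exact ⟨τ, rfl, .refl, hsorted⟩
  push Not at hsorted
  obtain ⟨a, b, hab, hf, hba⟩ := hsorted
  have hlt : τ⁻¹ b < τ⁻¹ a := hba.lt_of_ne (by simpa using hab.lt.ne')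
  obtain ⟨ρ, hρ, hρτ, hρsorted⟩ := ih _ (by have := permLength_swap_mul_add_one hab hlt; omega)
    (swap a b * τ) rfl
  exact ⟨ρ, hρ.trans (comp_swap_mul_of_eq hf τ), hρτ.trans (bruhatLE_swap_mul hab hlt), hρsorted⟩

lemma inv_lt_of_forall_permLength_le {n : ℕ} {β : Type*} {f : Fin n → β} {w : Perm (Fin n)}
    (hmin : ∀ τ : Perm (Fin n), f ∘ ⇑τ = f ∘ ⇑w → permLength w ≤ permLength τ)
    {a b : Fin n} (hab : a ⋖ b) (hf : f a = f b) : w⁻¹ a < w⁻¹ b := by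
  by_contra! hba
  have hlt : w⁻¹ b < w⁻¹ a := hba.lt_of_ne (by simpa using hab.lt.ne')
  have hle := hmin _ (comp_swap_mul_of_eq hf w)
  have hlen := permLength_swap_mul_add_one hab hlt
  omega

lemma strictMonoOn_inv_preimage_of_covBy {α β : Type*} [LinearOrder α] [SuccOrder α]
    [IsSuccArchimedean α] [PartialOrder β] {f : α → β} (hf : Antitone f) {σ : Perm α}
    (h : ∀ a b, a ⋖ b → f a = f b → σ⁻¹ a < σ⁻¹ b) (v : β) :
    StrictMonoOn (⇑σ⁻¹) (f ⁻¹' {v}) :=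
  strictMonoOn_of_lt_succ (Set.ordConnected_singleton.preimage_anti hf)
    fun a ha hav hsv => h a _ (Order.covBy_succ_of_not_isMax ha) (hav.trans hsv.symm)

lemma Equiv.Perm.eq_of_strictMonoOn_inv_preimage {α β : Type*} [LinearOrder α]
    [WellFoundedLT α] {f : α → β} {σ τ : Perm α} (h : f ∘ ⇑σ = f ∘ ⇑τ)
    (hσ : ∀ v, StrictMonoOn (⇑σ⁻¹) (f ⁻¹' {v})) (hτ : ∀ v, StrictMonoOn (⇑τ⁻¹) (f ⁻¹' {v})) :
    σ = τ := by
  ext i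
  induction i using WellFoundedLT.induction with
  | _ i ih =>
  have hfi : f (σ i) = f (τ i) := congrFun h i
  rcases lt_trichotomy (σ i) (τ i) with hlt | heq | hgt
  · have hpos : τ⁻¹ (σ i) < i := by simpa using hτ (f (τ i)) hfi rfl hlt
    have hσpos : σ (τ⁻¹ (σ i)) = σ i := by simpa using ih _ hpos
    exact absurd (σ.injective hσpos) hpos.ne
  · exact heq
  · have hpos : σ⁻¹ (τ i) < i := by simpa using hσ (f (σ i)) hfi.symm rfl hgt
    have hτpos : τ (σ⁻¹ (τ i)) = τ i := by simpa using (ih _ hpos).symm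
    exact absurd (τ.injective hτpos) hpos.ne

lemma bruhatLE_of_forall_permLength_le {n : ℕ} {β : Type*} [PartialOrder β] {f : Fin n → β}
    (hf : Antitone f) {g : Fin n → β} {w τ : Perm (Fin n)} (hw : f ∘ ⇑w = g)
    (hmin : ∀ τ' : Perm (Fin n), f ∘ ⇑τ' = g → permLength w ≤ permLength τ')
    (hτ : f ∘ ⇑τ = g) : BruhatLE w τ := by
  obtain ⟨ρ, hρ, hρτ, hρsorted⟩ := exists_bruhatLE_forall_covBy_inv_lt f τ
  have hρw : ρ = w := Perm.eq_of_strictMonoOn_inv_preimage (hρ.trans (hτ.trans hw.symm))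
    (strictMonoOn_inv_preimage_of_covBy hf hρsorted)
    (strictMonoOn_inv_preimage_of_covBy hf
      fun _ _ => inv_lt_of_forall_permLength_le fun τ' h => hmin τ' (h.trans hw))
  exact hρw ▸ hρτ

/-- `λ(β) = λ(α)` is encoded as `β` being a rearrangement of `lam`, and `w(β)` through its
characterizing property: a shortest permutation with `lam ∘ w(β) = β`. -/
theorem V_eq_orbit_of_lower_interval_general (n : ℕ) (lam : Fin n → ℕ)
    (hanti : Antitone lam)
    (wα : Equiv.Perm (Fin n)) :
    {β : Fin n → ℕ |
        (∃ τ : Equiv.Perm (Fin n), ∀ i, β i = lam (τ i)) ∧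
        ∀ wβ : Equiv.Perm (Fin n),
          ((∀ i, lam (wβ i) = β i) ∧
            ∀ τ : Equiv.Perm (Fin n), (∀ i, lam (τ i) = β i) →
              permLength wβ ≤ permLength τ) →
          BruhatLE wβ wα} =
      {β : Fin n → ℕ | ∃ σ : Equiv.Perm (Fin n), BruhatLE σ wα ∧ ∀ i, β i = lam (σ i)} := by
  ext β
  constructor
  · rintro ⟨⟨τ, hτ⟩, hV⟩
    obtain ⟨w, hw, hmin⟩ := Set.exists_min_image {w : Perm (Fin n) | ∀ i, lam (w i) = β i}
      permLength (Set.toFinite _) ⟨τ, fun i => (hτ i).symm⟩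
    exact ⟨w, hV w ⟨hw, hmin⟩, fun i => (hw i).symm⟩
  · rintro ⟨σ, hσ, hβ⟩
    refine ⟨⟨σ, hβ⟩, fun w ⟨hw, hmin⟩ => ?_⟩
    exact (bruhatLE_of_forall_permLength_le hanti (funext hw) (fun τ h => hmin τ (congrFun h))
      (funext fun i => (hβ i).symm)).trans hσ

/-- Let `lam` be the decreasing rearrangement of `α` and `wα` the shortest
permutation with `lam·wα = α`.  Then
`V(α) = {β : λ(β) = λ(α) and w(β) ≤ wα} = {lam·σ : σ ≤ wα}`.
Here `λ(β) = λ(α)` is expressed by `β` being a rearrangement of `lam`, and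
`w(β)` by the characterizing property of the shortest permutation sorting `β`. -/
theorem V_eq_orbit_of_lower_interval (n : ℕ) (α lam : Fin n → ℕ)
    (hanti : Antitone lam)
    (wα : Equiv.Perm (Fin n)) (hwα : ∀ i, lam (wα i) = α i)
    (hmin : ∀ τ : Equiv.Perm (Fin n), (∀ i, lam (τ i) = α i) →
      permLength wα ≤ permLength τ) :
    {β : Fin n → ℕ |
        (∃ τ : Equiv.Perm (Fin n), ∀ i, β i = lam (τ i)) ∧
        ∀ wβ : Equiv.Perm (Fin n),
          ((∀ i, lam (wβ i) = β i) ∧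
            ∀ τ : Equiv.Perm (Fin n), (∀ i, lam (τ i) = β i) →
              permLength wβ ≤ permLength τ) →
          BruhatLE wβ wα} =
      {β : Fin n → ℕ | ∃ σ : Equiv.Perm (Fin n), BruhatLE σ wα ∧ ∀ i, β i = lam (σ i)} :=
  V_eq_orbit_of_lower_interval_general n lam hanti wα
end

section
/- Let α be a composition with α_r < α_{r+1} for some r, and let α' = α·s_r (swap entries r and r+1). Then V(α) = V(α') ∪ {v·s_r : v ∈ V(α')}, where V(α) = {β : λ(β) = λ(α), w(β) ≤ w(α)}. -/
/-- `Vset lam W = {β : λ(β) = lam and w(β) ≤ W}`: the compositions `β` that are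
rearrangements of the partition `lam` whose shortest sorting permutation `w(β)`
(characterized by `lam·w(β) = β` and minimality of length) is below `W` in
Bruhat order. -/
def Vset {n : ℕ} (lam : Fin n → ℕ) (W : Equiv.Perm (Fin n)) : Set (Fin n → ℕ) :=
  {β | (∃ τ : Equiv.Perm (Fin n), ∀ i, β i = lam (τ i)) ∧
    ∀ wβ : Equiv.Perm (Fin n),
      ((∀ i, lam (wβ i) = β i) ∧
        ∀ τ : Equiv.Perm (Fin n), (∀ i, lam (τ i) = β i) →
          permLength wβ ≤ permLength τ) →
      BruhatLE wβ W}

/-!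
The rank matrix `r_u(k, l) = #{x < k | l ≤ u x}` characterizes the Bruhat order: `u ≤ w` iff
`r_u ≤ r_w` entrywise. Indeed a cover `u < u·(i j)` raises `r_u` by one on a rectangle, and
conversely, if `r_u ≤ r_w` and `u ≠ w`, let `i` be the first position where they differ; then
`u i < w i`, and swapping `u i` with the first later value in `(u i, w i]` is a cover that stays
below `w`. An adjacent transposition `s` only changes column `i₀ + 1` of the rank matrix, and
comparing three columns gives the lifting property: if `w s < w`, then `u ≤ w` implies `u ≤ w s`
when `u < u s` and `u s ≤ w s` when `u s < u`, while `u ≤ w s` implies `u s ≤ w`.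

The shortest permutation sorting `β` is the unique sorting permutation that is increasing on each
block of equal entries of `β`. Hence `w(β·s) = w(β)·s` whenever `β_r ≠ β_{r+1}`; in particular
`w(α') = w(α)·s < w(α)`, and both inclusions follow from the lifting property.
-/

open Equiv Finset

lemma sum_eq_add_add_sum_erase_pair {α M : Type*} [Fintype α] [DecidableEq α]
    [AddCommMonoid M] (f : α → M) {i j : α} (hij : i ≠ j) :
    ∑ x, f x = f i + f j + ∑ x ∈ (univ.erase i).erase j, f x := by
  rw [← add_sum_erase _ f (mem_univ i), ← add_sum_erase _ f (mem_erase.2 ⟨hij.symm, mem_univ j⟩),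
    add_assoc]

lemma sum_sum_eq_add_sum_erase_pair {α M : Type*} [Fintype α] [DecidableEq α]
    [AddCommMonoid M] (f : α → α → M) {i j : α} (hij : i ≠ j) :
    ∑ p, ∑ q, f p q = f i i + f i j + f j i + f j j +
      ∑ x ∈ (univ.erase i).erase j, (f i x + f x i + f j x + f x j) +
      ∑ p ∈ (univ.erase i).erase j, ∑ q ∈ (univ.erase i).erase j, f p q := by
  simp only [sum_eq_add_add_sum_erase_pair _ hij, sum_add_distrib]
  abel

section

variable {n : ℕ} {i₀ i₁ : Fin n}

lemma permLength_eq_sum (w : Perm (Fin n)) :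
    permLength w = ∑ p, ∑ q, if p < q ∧ w q < w p then 1 else 0 := by
  rw [permLength, card_filter, ← Fintype.sum_prod_type']

def betweenCount (u : Perm (Fin n)) (i j : Fin n) : ℕ :=
  #{x | i < x ∧ x < j ∧ u i < u x ∧ u x < u j}

lemma inversions_mul_swap_of_ne {u : Perm (Fin n)} {i j x : Fin n} (hij : i < j)
    (hu : u i < u j) (hxi : x ≠ i) (hxj : x ≠ j) :
    ((if i < x ∧ (u * swap i j) x < (u * swap i j) i then 1 else 0) +
        (if x < i ∧ (u * swap i j) i < (u * swap i j) x then 1 else 0) +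
        (if j < x ∧ (u * swap i j) x < (u * swap i j) j then 1 else 0) +
        (if x < j ∧ (u * swap i j) j < (u * swap i j) x then 1 else 0) : ℕ) =
      (if i < x ∧ u x < u i then 1 else 0) + (if x < i ∧ u i < u x then 1 else 0) +
        (if j < x ∧ u x < u j then 1 else 0) + (if x < j ∧ u j < u x then 1 else 0) +
        2 * if i < x ∧ x < j ∧ u i < u x ∧ u x < u j then 1 else 0 := by
  have hui : u x ≠ u i := u.injective.ne hxi
  have huj : u x ≠ u j := u.injective.ne hxj
  simp only [Perm.mul_apply, swap_apply_left, swap_apply_right, swap_apply_of_ne_of_ne hxi hxj]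
  split_ifs <;> omega

theorem permLength_mul_swap {u : Perm (Fin n)} {i j : Fin n} (hij : i < j) (hu : u i < u j) :
    permLength (u * swap i j) = permLength u + 2 * betweenCount u i j + 1 := by
  rw [permLength_eq_sum, permLength_eq_sum, sum_sum_eq_add_sum_erase_pair _ hij.ne,
    sum_sum_eq_add_sum_erase_pair _ hij.ne, betweenCount, card_filter,
    sum_eq_add_add_sum_erase_pair _ hij.ne]
  generalize hC : (univ.erase i).erase j = C
  have hmemC {x : Fin n} (hx : x ∈ C) : x ≠ i ∧ x ≠ j := by
    subst hC; exact ⟨(mem_erase.1 (mem_erase.1 hx).2).1, (mem_erase.1 hx).1⟩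
  have hinner : ∀ p ∈ C, ∀ q ∈ C,
      (if p < q ∧ (u * swap i j) q < (u * swap i j) p then 1 else 0 : ℕ) =
        if p < q ∧ u q < u p then 1 else 0 := by
    intro p hp q hq
    rw [Perm.mul_apply, Perm.mul_apply, swap_apply_of_ne_of_ne (hmemC hp).1 (hmemC hp).2,
      swap_apply_of_ne_of_ne (hmemC hq).1 (hmemC hq).2]
  rw [sum_congr rfl fun x hx => inversions_mul_swap_of_ne hij hu (hmemC hx).1 (hmemC hx).2,
    sum_congr rfl fun p hp => sum_congr rfl (hinner p hp), sum_add_distrib, ← mul_sum]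
  simp only [Perm.mul_apply, swap_apply_left, swap_apply_right, lt_irrefl, false_and,
    if_false, hij, hu, not_lt_of_gt hij, not_lt_of_gt hu, and_false, and_self, if_true]
  omega

lemma permLength_mul_swap_lt {u : Perm (Fin n)} {i j : Fin n} (hij : i < j) (hu : u j < u i) :
    permLength (u * swap i j) < permLength u := by
  have := permLength_mul_swap (u := u * swap i j) hij (by simpa [Perm.mul_apply] using hu)
  rw [mul_swap_mul_self] at this
  omega

lemma ascent_of_permLength_lt_mul_swap {u : Perm (Fin n)} {i j : Fin n} (hij : i < j)
    (h : permLength u < permLength (u * swap i j)) : u i < u j := by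
  by_contra hge
  exact (permLength_mul_swap_lt hij
    (lt_of_le_of_ne (not_lt.1 hge) (u.injective.ne hij.ne'))).not_gt h

def rankMatrix (u : Perm (Fin n)) (k l : ℕ) : ℕ :=
  #{x : Fin n | (x : ℕ) < k ∧ l ≤ (u x : ℕ)}

def RankLE (u w : Perm (Fin n)) : Prop :=
  ∀ k l, rankMatrix u k l ≤ rankMatrix w k l

lemma rankMatrix_mul_swap_eq_sum (u : Perm (Fin n)) (i j : Fin n) (k l : ℕ) :
    rankMatrix (u * swap i j) k l =
      ∑ y, if ((swap i j y : Fin n) : ℕ) < k ∧ l ≤ (u y : ℕ) then 1 else 0 := by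
  rw [rankMatrix, card_filter, ← Equiv.sum_comp (swap i j)]
  simp [Perm.mul_apply]

lemma rankMatrix_mul_swap {u : Perm (Fin n)} {i j : Fin n} (hij : i < j) (hu : u i < u j)
    (k l : ℕ) :
    rankMatrix (u * swap i j) k l = rankMatrix u k l +
      if (i : ℕ) < k ∧ k ≤ j ∧ (u i : ℕ) < l ∧ l ≤ (u j : ℕ) then 1 else 0 := by
  rw [rankMatrix_mul_swap_eq_sum, rankMatrix, card_filter,
    sum_eq_add_add_sum_erase_pair _ hij.ne, sum_eq_add_add_sum_erase_pair _ hij.ne,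
    sum_congr rfl fun y hy => by
      rw [swap_apply_of_ne_of_ne (mem_erase.1 (mem_erase.1 hy).2).1 (mem_erase.1 hy).1],
    swap_apply_left, swap_apply_right]
  split_ifs <;> omega

lemma rankMatrix_mul_swap_of_adjacent (hadj : (i₁ : ℕ) = i₀ + 1)
    (u : Perm (Fin n)) {k : ℕ} (hk : k ≠ i₀ + 1) (l : ℕ) :
    rankMatrix (u * swap i₀ i₁) k l = rankMatrix u k l := by
  rw [rankMatrix_mul_swap_eq_sum, rankMatrix, card_filter]
  refine sum_congr rfl fun y _ => ?_
  rcases eq_or_ne y i₀ with rfl | h₀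
  · simp only [swap_apply_left]; split_ifs <;> omega
  rcases eq_or_ne y i₁ with rfl | h₁
  · simp only [swap_apply_right]; split_ifs <;> omega
  rw [swap_apply_of_ne_of_ne h₀ h₁]

lemma rankMatrix_succ (u : Perm (Fin n)) (i : Fin n) (l : ℕ) :
    rankMatrix u (i + 1) l = rankMatrix u i l + if l ≤ (u i : ℕ) then 1 else 0 := by
  have hrest : ∀ x ∈ univ.erase i, (if (x : ℕ) < i + 1 ∧ l ≤ (u x : ℕ) then 1 else 0 : ℕ) =
      if (x : ℕ) < i ∧ l ≤ (u x : ℕ) then 1 else 0 := fun x hx => by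
    have : (x : ℕ) ≠ i := Fin.val_ne_of_ne (mem_erase.1 hx).1
    simp only [show (x : ℕ) < i + 1 ↔ (x : ℕ) < i by omega]
  rw [rankMatrix, rankMatrix, card_filter, card_filter, ← add_sum_erase _ _ (mem_univ i),
    ← add_sum_erase _ _ (mem_univ i), sum_congr rfl hrest]
  split_ifs <;> omega

lemma rankMatrix_congr {u w : Perm (Fin n)} {k : ℕ} (h : ∀ x : Fin n, (x : ℕ) < k → u x = w x)
    (l : ℕ) : rankMatrix u k l = rankMatrix w k l := by
  unfold rankMatrix
  congr 1
  exact filter_congr fun x _ => and_congr_right fun hx => by rw [h x hx]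

lemma rankMatrix_eq_add_card {u : Perm (Fin n)} {l m : ℕ} (hlm : l ≤ m) (k : ℕ) :
    rankMatrix u k l =
      rankMatrix u k m + #{x : Fin n | (x : ℕ) < k ∧ l ≤ (u x : ℕ) ∧ (u x : ℕ) < m} := by
  rw [rankMatrix, rankMatrix, card_filter, card_filter, card_filter, ← sum_add_distrib]
  exact sum_congr rfl fun x _ => by split_ifs <;> omega

lemma rankLE_mul_swap {u : Perm (Fin n)} {i j : Fin n} (hij : i < j) (hu : u i < u j) :
    RankLE u (u * swap i j) := fun k l => by
  rw [rankMatrix_mul_swap hij hu]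
  exact Nat.le_add_right _ _

lemma rankLE_of_cover {a b : Perm (Fin n)}
    (h : (∃ i j : Fin n, i ≠ j ∧ b = a * swap i j) ∧ permLength b = permLength a + 1) :
    RankLE a b := by
  obtain ⟨⟨i, j, hne, rfl⟩, hlen⟩ := h
  wlog hij : i < j generalizing i j
  · rw [swap_comm] at hlen ⊢
    exact this j i hne.symm hlen (lt_of_le_of_ne (not_lt.1 hij) hne.symm)
  exact rankLE_mul_swap hij (ascent_of_permLength_lt_mul_swap hij (by omega))

lemma rankLE_of_bruhatLE {u w : Perm (Fin n)} (h : BruhatLE u w) : RankLE u w := by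
  induction h with
  | refl => exact fun k l => le_rfl
  | tail _ hcov ih => exact fun k l => (ih k l).trans (rankLE_of_cover hcov k l)

lemma RankLE.apply_lt {u w : Perm (Fin n)} (h : RankLE u w) {i : Fin n}
    (hpre : ∀ x, x < i → u x = w x) (hne : u i ≠ w i) : u i < w i := by
  have hcol := h (i + 1) (u i)
  rw [rankMatrix_succ, rankMatrix_succ, rankMatrix_congr fun x hx => hpre x hx] at hcol
  have : (u i : ℕ) ≠ w i := Fin.val_ne_of_ne hne
  split_ifs at hcol <;> omega

lemma RankLE.rankMatrix_lt {u w : Perm (Fin n)} (h : RankLE u w) {i j : Fin n}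
    (hpre : ∀ x, x < i → u x = w x) (hjw : u j ≤ w i)
    (hbetween : ∀ x, i < x → x < j → u i < u x → w i < u x)
    {k l : ℕ} (hik : (i : ℕ) < k) (hkj : k ≤ j) (hil : (u i : ℕ) < l) (hlj : l ≤ u j) :
    rankMatrix u k l < rankMatrix w k l := by
  -- Among the first `k` positions, those where `u` takes a value in `[l, w i]` all lie before
  -- `i` (by the choice of `j`), where `u` agrees with `w`; `w` has the extra one `i`.
  have hband : #{x : Fin n | (x : ℕ) < k ∧ l ≤ (u x : ℕ) ∧ (u x : ℕ) < w i + 1} <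
      #{x : Fin n | (x : ℕ) < k ∧ l ≤ (w x : ℕ) ∧ (w x : ℕ) < w i + 1} := by
    refine card_lt_card ((ssubset_iff_of_subset fun x hx => ?_).2 ⟨i, ?_, ?_⟩)
    · simp only [mem_filter, mem_univ, true_and] at hx ⊢
      have hxi : x < i := by
        by_contra hxi
        rcases (not_lt.1 hxi).lt_or_eq with hix | rfl
        · have := hbetween x hix (by omega) (by omega); omega
        · omega
      rwa [← hpre x hxi]
    · simp only [mem_filter, mem_univ, true_and]; omega
    · simp only [mem_filter, mem_univ, true_and]; omega
  rw [rankMatrix_eq_add_card (m := w i + 1) (by omega),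
    rankMatrix_eq_add_card (u := w) (m := w i + 1) (by omega)]
  have := h k (w i + 1)
  omega

lemma RankLE.exists_cover {u w : Perm (Fin n)} (h : RankLE u w) (hne : u ≠ w) :
    ∃ i j : Fin n, i < j ∧ u i < u j ∧ betweenCount u i j = 0 ∧ RankLE (u * swap i j) w := by
  have hdiff : {x | u x ≠ w x}.Nonempty := by
    by_contra! hempty
    exact hne (Equiv.ext fun x => by_contra fun hx => hempty.subset hx)
  obtain ⟨i, hi, hmin_i⟩ := wellFounded_lt.has_min _ hdiff
  have hpre : ∀ x, x < i → u x = w x := fun x hx => by_contra fun h' => hmin_i x h' hx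
  have hiw := h.apply_lt hpre hi
  have hcand : {x | i < x ∧ u i < u x ∧ u x ≤ w i}.Nonempty := by
    refine ⟨u.symm (w i), ?_, by simpa using hiw, by simp⟩
    rcases lt_trichotomy (u.symm (w i)) i with hlt | heq | hgt
    · have := hpre _ hlt
      rw [apply_symm_apply] at this
      exact absurd (w.injective this).symm hlt.ne
    · exact absurd (u.symm_apply_eq.1 heq).symm hi
    · exact hgt
  obtain ⟨j, ⟨hij, hj, hjw⟩, hmin_j⟩ := wellFounded_lt.has_min _ hcand
  have hbetween : ∀ x, i < x → x < j → u i < u x → w i < u x :=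
    fun x hix hxj hux => lt_of_not_ge fun h' => hmin_j x ⟨hix, hux, h'⟩ hxj
  refine ⟨i, j, hij, hj, ?_, fun k l => ?_⟩
  · rw [betweenCount, card_eq_zero, filter_eq_empty_iff]
    rintro x - ⟨hix, hxj, hux, hxj'⟩
    have := hbetween x hix hxj hux
    omega
  · rw [rankMatrix_mul_swap hij hj]
    split_ifs with hrect
    · exact h.rankMatrix_lt hpre hjw hbetween hrect.1 hrect.2.1 hrect.2.2.1 hrect.2.2.2
    · simpa using h k l

def rankSum (u : Perm (Fin n)) : ℕ :=
  ∑ k ∈ range (n + 1), ∑ l ∈ range (n + 1), rankMatrix u k l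

lemma RankLE.rankSum_le {u w : Perm (Fin n)} (h : RankLE u w) : rankSum u ≤ rankSum w :=
  sum_le_sum fun k _ => sum_le_sum fun l _ => h k l

lemma rankSum_lt_mul_swap {u : Perm (Fin n)} {i j : Fin n} (hij : i < j) (hu : u i < u j) :
    rankSum u < rankSum (u * swap i j) := by
  have hle := rankLE_mul_swap hij hu
  refine sum_lt_sum (fun k _ => sum_le_sum fun l _ => hle k l)
    ⟨i + 1, by simp, sum_lt_sum (fun l _ => hle _ l) ⟨u i + 1, by simp, ?_⟩⟩
  rw [rankMatrix_mul_swap hij hu, if_pos (by omega)]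
  omega

lemma bruhatLE_of_rankLE {u w : Perm (Fin n)} (h : RankLE u w) : BruhatLE u w := by
  induction hd : rankSum w - rankSum u using Nat.strong_induction_on generalizing u with
  | _ d ih =>
  by_cases hne : u = w
  · exact hne ▸ Relation.ReflTransGen.refl
  obtain ⟨i, j, hij, hu, hzero, hstep⟩ := h.exists_cover hne
  have hlen : permLength (u * swap i j) = permLength u + 1 := by
    rw [permLength_mul_swap hij hu, hzero]
  have := rankSum_lt_mul_swap hij hu
  have := hstep.rankSum_le
  exact .head ⟨⟨i, j, hij.ne, rfl⟩, hlen⟩ (ih _ (by omega) hstep rfl)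

theorem bruhatLE_iff_rankLE {u w : Perm (Fin n)} : BruhatLE u w ↔ RankLE u w :=
  ⟨rankLE_of_bruhatLE, bruhatLE_of_rankLE⟩

lemma RankLE.mul_swap_of_ascent (hadj : (i₁ : ℕ) = i₀ + 1) {u W : Perm (Fin n)}
    (h : RankLE u W) (hu : u i₀ < u i₁) : RankLE u (W * swap i₀ i₁) := by
  intro k l
  rcases eq_or_ne k (i₀ + 1) with rfl | hk
  · have h₀ := h i₀ l
    have h₂ := h (i₁ + 1) l
    rw [rankMatrix_succ u i₁, rankMatrix_succ W i₁, hadj, rankMatrix_succ, rankMatrix_succ] at h₂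
    rw [rankMatrix_succ, rankMatrix_succ, rankMatrix_mul_swap_of_adjacent hadj _ (by omega),
      Perm.mul_apply, swap_apply_left]
    split_ifs at h₂ ⊢ <;> omega
  · rw [rankMatrix_mul_swap_of_adjacent hadj _ hk]
    exact h k l

lemma RankLE.mul_swap_of_le_mul_swap (hadj : (i₁ : ℕ) = i₀ + 1) {u W : Perm (Fin n)}
    (h : RankLE u (W * swap i₀ i₁)) (hW : W i₁ < W i₀) : RankLE (u * swap i₀ i₁) W := by
  intro k l
  rcases eq_or_ne k (i₀ + 1) with rfl | hk
  · have h₀ := h i₀ l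
    have h₁ := h (i₀ + 1) l
    have h₂ := h (i₁ + 1) l
    rw [rankMatrix_mul_swap_of_adjacent hadj _ (by omega)] at h₀ h₂
    rw [rankMatrix_succ, rankMatrix_succ, Perm.mul_apply, swap_apply_left,
      rankMatrix_mul_swap_of_adjacent hadj _ (by omega)] at h₁
    rw [rankMatrix_succ u i₁, rankMatrix_succ W i₁, hadj, rankMatrix_succ, rankMatrix_succ] at h₂
    rw [rankMatrix_succ, rankMatrix_succ, Perm.mul_apply, swap_apply_left,
      rankMatrix_mul_swap_of_adjacent hadj _ (by omega)]
    split_ifs at h₁ h₂ ⊢ <;> omega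
  · have := h k l
    rwa [rankMatrix_mul_swap_of_adjacent hadj _ hk] at this ⊢

lemma bruhatLE_mul_swap {u : Perm (Fin n)} {i j : Fin n} (hij : i < j) (hu : u i < u j) :
    BruhatLE u (u * swap i j) :=
  bruhatLE_iff_rankLE.2 (rankLE_mul_swap hij hu)

lemma mul_swap_bruhatLE {u : Perm (Fin n)} {i j : Fin n} (hij : i < j) (hu : u j < u i) :
    BruhatLE (u * swap i j) u := by
  simpa using bruhatLE_mul_swap (u := u * swap i j) hij (by simpa [Perm.mul_apply] using hu)

lemma BruhatLE.mul_swap_of_ascent (hadj : (i₁ : ℕ) = i₀ + 1) {u W : Perm (Fin n)}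
    (h : BruhatLE u W) (hu : u i₀ < u i₁) : BruhatLE u (W * swap i₀ i₁) :=
  bruhatLE_iff_rankLE.2 ((bruhatLE_iff_rankLE.1 h).mul_swap_of_ascent hadj hu)

lemma BruhatLE.mul_swap_of_descent (hadj : (i₁ : ℕ) = i₀ + 1) {u W : Perm (Fin n)}
    (h : BruhatLE u W) (hu : u i₁ < u i₀) : BruhatLE (u * swap i₀ i₁) (W * swap i₀ i₁) :=
  BruhatLE.mul_swap_of_ascent hadj ((mul_swap_bruhatLE (by omega) hu).trans h)
    (by simpa [Perm.mul_apply] using hu)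

lemma BruhatLE.mul_swap_of_le_mul_swap (hadj : (i₁ : ℕ) = i₀ + 1) {u W : Perm (Fin n)}
    (h : BruhatLE u (W * swap i₀ i₁)) (hW : W i₁ < W i₀) : BruhatLE (u * swap i₀ i₁) W :=
  bruhatLE_iff_rankLE.2 ((bruhatLE_iff_rankLE.1 h).mul_swap_of_le_mul_swap hadj hW)

def IsMinSorter (lam β : Fin n → ℕ) (u : Perm (Fin n)) : Prop :=
  (∀ i, lam (u i) = β i) ∧
    ∀ τ : Perm (Fin n), (∀ i, lam (τ i) = β i) → permLength u ≤ permLength τ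

lemma exists_isMinSorter {lam β : Fin n → ℕ} (h : ∃ τ : Perm (Fin n), ∀ i, lam (τ i) = β i) :
    ∃ u, IsMinSorter lam β u := by
  classical
  obtain ⟨τ, hτ⟩ := h
  obtain ⟨u, hu, hmin⟩ :=
    exists_min_image {τ | ∀ i, lam (τ i) = β i} permLength ⟨τ, by simpa using hτ⟩
  exact ⟨u, by simpa using hu, fun σ hσ => hmin σ (by simpa using hσ)⟩

lemma IsMinSorter.apply_lt_apply {lam β : Fin n → ℕ} {u : Perm (Fin n)}
    (hu : IsMinSorter lam β u) {i j : Fin n} (hij : i < j) (hβ : β i = β j) : u i < u j := by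
  by_contra hge
  have hsorts : ∀ x, lam ((u * swap i j) x) = β x := fun x => by
    rw [Perm.mul_apply, hu.1, apply_swap_eq_self hβ]
  exact (permLength_mul_swap_lt hij
    (lt_of_le_of_ne (not_lt.1 hge) (u.injective.ne hij.ne'))).not_ge (hu.2 _ hsorts)

lemma card_lt_eq_card_lt_of_sorts {lam β : Fin n → ℕ} {u : Perm (Fin n)}
    (hs : ∀ i, lam (u i) = β i) (hb : ∀ i j, i < j → β i = β j → u i < u j) (x : Fin n) :
    #{y | β y = β x ∧ y < x} = #{t | lam t = β x ∧ t < u x} := by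
  refine card_equiv u fun y => ?_
  simp only [mem_filter, mem_univ, true_and, hs]
  refine and_congr_right fun hβ => ⟨fun hyx => hb y x hyx hβ, fun huyx => ?_⟩
  rcases lt_trichotomy y x with hyx | rfl | hxy
  · exact hyx
  · exact absurd huyx (lt_irrefl _)
  · exact absurd (hb x y hxy hβ.symm) huyx.not_gt

lemma eq_of_sorts {lam β : Fin n → ℕ} {u v : Perm (Fin n)}
    (hsu : ∀ i, lam (u i) = β i) (hbu : ∀ i j, i < j → β i = β j → u i < u j)
    (hsv : ∀ i, lam (v i) = β i) (hbv : ∀ i j, i < j → β i = β j → v i < v j) : u = v := by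
  refine Equiv.ext fun x => by_contra fun hne => ?_
  wlog hlt : u x < v x generalizing u v
  · exact this hsv hbv hsu hbu (Ne.symm hne) (lt_of_le_of_ne (not_lt.1 hlt) (Ne.symm hne))
  have hcard := (card_lt_eq_card_lt_of_sorts hsu hbu x).symm.trans
    (card_lt_eq_card_lt_of_sorts hsv hbv x)
  refine (card_lt_card ((ssubset_iff_of_subset fun t ht => ?_).2 ⟨u x, ?_, ?_⟩)).ne hcard
  · simp only [mem_filter, mem_univ, true_and] at ht ⊢
    exact ⟨ht.1, ht.2.trans hlt⟩
  · simp [hlt, hsu]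
  · simp

lemma isMinSorter_iff {lam β : Fin n → ℕ} {u : Perm (Fin n)} :
    IsMinSorter lam β u ↔
      (∀ i, lam (u i) = β i) ∧ ∀ i j, i < j → β i = β j → u i < u j := by
  refine ⟨fun hu => ⟨hu.1, fun i j => hu.apply_lt_apply⟩, fun ⟨hs, hb⟩ => ?_⟩
  obtain ⟨v, hv⟩ := exists_isMinSorter ⟨u, hs⟩
  rwa [eq_of_sorts hs hb hv.1 fun i j => hv.apply_lt_apply]

lemma IsMinSorter.unique {lam β : Fin n → ℕ} {u v : Perm (Fin n)} (hu : IsMinSorter lam β u)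
    (hv : IsMinSorter lam β v) : u = v :=
  eq_of_sorts hu.1 (fun _ _ => hu.apply_lt_apply) hv.1 fun _ _ => hv.apply_lt_apply

lemma swap_apply_lt_swap_apply (hadj : (i₁ : ℕ) = i₀ + 1) {i j : Fin n} (hij : i < j)
    (hne : ¬(i = i₀ ∧ j = i₁)) : swap i₀ i₁ i < swap i₀ i₁ j := by
  simp only [swap_apply_def]
  split_ifs <;> omega

lemma IsMinSorter.mul_swap (hadj : (i₁ : ℕ) = i₀ + 1) {lam β : Fin n → ℕ} {u : Perm (Fin n)}
    (hu : IsMinSorter lam β u) (hβ : β i₀ ≠ β i₁) :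
    IsMinSorter lam (fun i => β (swap i₀ i₁ i)) (u * swap i₀ i₁) := by
  refine isMinSorter_iff.2 ⟨fun i => hu.1 _, fun i j hij hb => hu.apply_lt_apply ?_ hb⟩
  refine swap_apply_lt_swap_apply hadj hij fun ⟨hi, hj⟩ => hβ ?_
  subst hi hj
  simpa using hb.symm

lemma mem_Vset_iff {lam β : Fin n → ℕ} {W : Perm (Fin n)} :
    β ∈ Vset lam W ↔ ∃ u, IsMinSorter lam β u ∧ BruhatLE u W := by
  constructor
  · rintro ⟨⟨τ, hτ⟩, hall⟩
    obtain ⟨u, hu⟩ := exists_isMinSorter ⟨τ, fun i => (hτ i).symm⟩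
    exact ⟨u, hu, hall u hu⟩
  · rintro ⟨u, hu, huW⟩
    exact ⟨⟨u, fun i => (hu.1 i).symm⟩, fun v hv => hu.unique hv ▸ huW⟩

end

/-- If `α_r < α_{r+1}` and `α' = α·s_r`, then
`V(α) = V(α') ∪ {v·s_r : v ∈ V(α')}`. -/
theorem Vset_decomposition (n r : ℕ) (hr : r + 1 < n)
    (α α' lam : Fin n → ℕ) (hanti : Antitone lam)
    (s : Equiv.Perm (Fin n))
    (hs : s = Equiv.swap ⟨r, Nat.lt_of_succ_lt hr⟩ ⟨r + 1, hr⟩)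
    (hlt : α ⟨r, Nat.lt_of_succ_lt hr⟩ < α ⟨r + 1, hr⟩)
    (hα' : ∀ i, α' i = α (s i))
    (wα : Equiv.Perm (Fin n)) (hwα : ∀ i, lam (wα i) = α i)
    (hmin : ∀ τ : Equiv.Perm (Fin n), (∀ i, lam (τ i) = α i) →
      permLength wα ≤ permLength τ)
    (wα' : Equiv.Perm (Fin n)) (hwα' : ∀ i, lam (wα' i) = α' i)
    (hmin' : ∀ τ : Equiv.Perm (Fin n), (∀ i, lam (τ i) = α' i) →
      permLength wα' ≤ permLength τ) :
    Vset lam wα = Vset lam wα' ∪ {β | ∃ v ∈ Vset lam wα', β = fun i => v (s i)} := by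
  subst hs
  set i₀ : Fin n := ⟨r, Nat.lt_of_succ_lt hr⟩
  set i₁ : Fin n := ⟨r + 1, hr⟩
  have hadj : (i₁ : ℕ) = i₀ + 1 := rfl
  have h01 : i₀ < i₁ := by omega
  have hW : IsMinSorter lam α wα := ⟨hwα, hmin⟩
  have hdesc : wα i₁ < wα i₀ := hanti.reflect_lt (by rwa [hwα, hwα])
  have hW' : wα' = wα * swap i₀ i₁ :=
    IsMinSorter.unique ⟨hwα', hmin'⟩ (funext hα' ▸ hW.mul_swap hadj hlt.ne)
  have hW'W : BruhatLE (wα * swap i₀ i₁) wα := mul_swap_bruhatLE h01 hdesc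
  ext β
  simp only [Set.mem_union, Set.mem_ofPred_eq, mem_Vset_iff, hW']
  constructor
  · rintro ⟨u, hu, huW⟩
    rcases lt_or_gt_of_ne (u.injective.ne h01.ne) with hasc | hdes
    · exact .inl ⟨u, hu, huW.mul_swap_of_ascent hadj hasc⟩
    · have hβ : β i₀ ≠ β i₁ := fun h => (hu.apply_lt_apply h01 h).not_gt hdes
      exact .inr ⟨_, ⟨_, hu.mul_swap hadj hβ, huW.mul_swap_of_descent hadj hdes⟩,
        by simp⟩
  · rintro (⟨u, hu, huW'⟩ | ⟨γ, ⟨v, hv, hvW'⟩, rfl⟩)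
    · exact ⟨u, hu, huW'.trans hW'W⟩
    · by_cases hγ : γ i₀ = γ i₁
      · simp only [apply_swap_eq_self hγ]
        exact ⟨v, hv, hvW'.trans hW'W⟩
      · exact ⟨_, hv.mul_swap hadj hγ, hvW'.mul_swap_of_le_mul_swap hadj hdesc⟩
end
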